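/- Let q = p^n ≡ 3 (mod 4) be an odd prime power with p ≠ 3, and χ the quadratic character of 𝔽_q. Then ∑_{x ∈ 𝔽_q} χ((x²+x+1)(3x²+2x+3)) = ∑_{x ∈ 𝔽_q} χ(x(x+1)(x−2)) − χ(3). -/

import Mathlib

/-! The quartic is palindromic: dividing it by `x²` and putting `y = x + x⁻¹` turns it
into `(y + 1)(3y + 2)`, and each `y` has `1 + χ(y² - 4)` preimages. The resulting sum splits
into the quadratic sum `∑ χ((y + 1)(3y + 2)) = -χ(3)` and `∑ χ((y² - 4)(y + 1)(3y + 2))`,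
which the Möbius substitution `y = 2(x - 1)/(3 - x)` carries to the cubic sum, up to the
boundary term `χ(3)`. -/

open Finset

namespace FiniteField

variable {F : Type*} [Field F] [Fintype F] [DecidableEq F]

lemma quadraticChar_sq_mul {u : F} (hu : u ≠ 0) (w : F) :
    quadraticChar F (u ^ 2 * w) = quadraticChar F w := by
  rw [map_mul, quadraticChar_sq_one' hu, one_mul]

lemma sum_quadraticChar_mul_sub_mul_sub (hF : ringChar F ≠ 2) {b c : F} (hbc : b ≠ c) (a : F) :
    ∑ y : F, quadraticChar F (a * ((y - b) * (y - c))) = -quadraticChar F a := by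
  have hcb : c - b ≠ 0 := sub_ne_zero.mpr hbc.symm
  have hjac : ∑ x : F, quadraticChar F x * quadraticChar F (1 - x) = -quadraticChar F (-1) := by
    have := jacobiSum_nontrivial_inv (quadraticChar_ne_one hF)
    rwa [(quadraticChar_isQuadratic F).inv] at this
  have hline : Function.Bijective fun x : F ↦ b + (c - b) * x :=
    (add_right_injective b).comp (mul_right_injective₀ hcb) |>.bijective_of_finite
  calc ∑ y : F, quadraticChar F (a * ((y - b) * (y - c)))
      = ∑ x : F, quadraticChar F ((c - b) ^ 2 * (-a * (x * (1 - x)))) :=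
        Eq.symm <| Fintype.sum_bijective _ hline _ _ fun x ↦ congrArg (quadraticChar F) (by ring)
    _ = quadraticChar F (-a) * ∑ x : F, quadraticChar F x * quadraticChar F (1 - x) := by
        simp only [quadraticChar_sq_mul hcb, map_mul, mul_sum]
    _ = -quadraticChar F a := by
        rw [hjac, neg_eq_neg_one_mul a, map_mul, mul_neg, mul_comm, ← mul_assoc, ← map_mul]
        norm_num

lemma card_filter_add_inv_eq (hF : ringChar F ≠ 2) (y : F) :
    (#{x ∈ univ.erase (0 : F) | x + x⁻¹ = y} : ℤ) = quadraticChar F (y ^ 2 - 4) + 1 := by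
  have h2 : (2 : F) ≠ 0 := Ring.two_ne_zero hF
  rw [← quadraticChar_card_sqrts hF]
  congr 1
  -- `x + x⁻¹ = y` means `x² - y x + 1 = 0`, i.e. `(2x - y)² = y² - 4`
  refine card_bij' (fun x _ ↦ 2 * x - y) (fun z _ ↦ (z + y) / 2) ?_ ?_ ?_ ?_
  · intro x hx
    simp only [mem_filter, mem_erase, mem_univ, and_true] at hx
    simp only [Set.mem_toFinset, Set.mem_ofPred_eq]
    rw [← hx.2]
    field_simp [hx.1]
    ring
  · intro z hz
    simp only [Set.mem_toFinset, Set.mem_ofPred_eq] at hz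
    have hzy : z + y ≠ 0 := by
      intro h
      have h4 : (4 : F) ≠ 0 := by simpa [show (4 : F) = 2 ^ 2 by norm_num] using h2
      exact h4 (by linear_combination (y - z) * h + hz)
    simp only [mem_filter, mem_erase, mem_univ, and_true]
    refine ⟨div_ne_zero hzy h2, ?_⟩
    field_simp
    linear_combination hz
  · intro x _
    field_simp
    ring
  · intro z _
    field_simp
    ring

lemma sum_erase_zero_comp_add_inv {M : Type*} [AddCommGroup M] (hF : ringChar F ≠ 2)
    (f : F → M) :
    ∑ x ∈ univ.erase (0 : F), f (x + x⁻¹) =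
      ∑ y : F, (quadraticChar F (y ^ 2 - 4) + 1) • f y := by
  rw [← sum_fiberwise' _ (fun x ↦ x + x⁻¹)]
  refine sum_congr rfl fun y _ ↦ ?_
  rw [sum_const, ← card_filter_add_inv_eq hF y, natCast_zsmul]

lemma sum_quadraticChar_palindromic_quartic (hF : ringChar F ≠ 2) :
    ∑ x : F, quadraticChar F ((x ^ 2 + x + 1) * (3 * x ^ 2 + 2 * x + 3)) =
      quadraticChar F 3 +
        ∑ y : F,
          (quadraticChar F (y ^ 2 - 4) + 1) • quadraticChar F ((y + 1) * (3 * y + 2)) := by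
  rw [← add_sum_erase univ _ (mem_univ (0 : F)),
    ← sum_erase_zero_comp_add_inv hF fun y ↦ quadraticChar F ((y + 1) * (3 * y + 2))]
  congr 1
  · norm_num
  refine sum_congr rfl fun x hx ↦ ?_
  have hx : x ≠ 0 := ne_of_mem_erase hx
  -- `x⁻² (x² + x + 1)(3x² + 2x + 3) = (y + 1)(3y + 2)` for `y = x + x⁻¹`
  rw [← quadraticChar_sq_mul (inv_ne_zero hx)]
  congr 1
  field_simp
  ring

lemma sum_quadraticChar_quartic_eq_cubic (hF : ringChar F ≠ 2) :
    ∑ y : F, quadraticChar F ((y ^ 2 - 4) * ((y + 1) * (3 * y + 2))) =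
      ∑ x : F, quadraticChar F (x * (x + 1) * (x - 2)) - quadraticChar F 3 := by
  have h2 : (2 : F) ≠ 0 := Ring.two_ne_zero hF
  have h4 : (4 : F) ≠ 0 := by simpa [show (4 : F) = 2 ^ 2 by norm_num] using h2
  rw [← add_sum_erase univ _ (mem_univ (-2 : F)), ← add_sum_erase univ _ (mem_univ (3 : F)),
    show (3 : F) * (3 + 1) * (3 - 2) = 2 ^ 2 * 3 by norm_num, quadraticChar_sq_mul h2,
    show (-2 : F) ^ 2 - 4 = 0 by norm_num, zero_mul, quadraticChar_zero, zero_add,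
    add_sub_cancel_left]
  -- the Möbius map `y ↦ (3y + 2) / (y + 2)` sends `-2` to `∞` and `∞` to `3`
  refine sum_bij' (fun y _ ↦ (3 * y + 2) / (y + 2)) (fun x _ ↦ 2 * (x - 1) / (3 - x))
    ?_ ?_ ?_ ?_ ?_
  · intro y hy
    have hy : y + 2 ≠ 0 := fun h ↦ ne_of_mem_erase hy (by linear_combination h)
    refine mem_erase.mpr ⟨fun h ↦ h4 ?_, mem_univ _⟩
    rw [div_eq_iff hy] at h
    linear_combination -h
  · intro x hx
    have hx : 3 - x ≠ 0 := fun h ↦ ne_of_mem_erase hx (by linear_combination -h)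
    refine mem_erase.mpr ⟨fun h ↦ h4 ?_, mem_univ _⟩
    rw [div_eq_iff hx] at h
    linear_combination h
  · intro y hy
    have hy : y + 2 ≠ 0 := fun h ↦ ne_of_mem_erase hy (by linear_combination h)
    rw [show (3 * y + 2) / (y + 2) - 1 = 2 * y / (y + 2) by field_simp; ring,
      show 3 - (3 * y + 2) / (y + 2) = 4 / (y + 2) by field_simp; ring]
    field_simp
    ring
  · intro x hx
    have hx : 3 - x ≠ 0 := fun h ↦ ne_of_mem_erase hx (by linear_combination -h)
    rw [show 3 * (2 * (x - 1) / (3 - x)) + 2 = 4 * x / (3 - x) by field_simp; ring,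
      show 2 * (x - 1) / (3 - x) + 2 = 4 / (3 - x) by field_simp; ring]
    field_simp
  · intro y hy
    have hy : y + 2 ≠ 0 := fun h ↦ ne_of_mem_erase hy (by linear_combination h)
    rw [← quadraticChar_sq_mul (div_ne_zero h2 (pow_ne_zero 2 hy))]
    congr 1
    field_simp
    ring

theorem sum_quadraticChar_palindromic_quartic_eq_cubic (hF : ringChar F ≠ 2)
    (h3 : (3 : F) ≠ 0) :
    ∑ x : F, quadraticChar F ((x ^ 2 + x + 1) * (3 * x ^ 2 + 2 * x + 3)) =
      ∑ x : F, quadraticChar F (x * (x + 1) * (x - 2)) - quadraticChar F 3 := by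
  have hroots : (-1 : F) ≠ -(2 / 3) := by
    rw [Ne, neg_inj, eq_div_iff h3, one_mul]
    exact fun h ↦ one_ne_zero (by linear_combination h)
  have hquad : ∑ y : F, quadraticChar F ((y + 1) * (3 * y + 2)) = -quadraticChar F 3 := by
    rw [← sum_quadraticChar_mul_sub_mul_sub hF hroots]
    refine sum_congr rfl fun y _ ↦ congrArg _ ?_
    field_simp
    ring
  have hweight (y : F) :
      (quadraticChar F (y ^ 2 - 4) + 1) • quadraticChar F ((y + 1) * (3 * y + 2)) =
      quadraticChar F ((y ^ 2 - 4) * ((y + 1) * (3 * y + 2))) +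
        quadraticChar F ((y + 1) * (3 * y + 2)) := by
    rw [add_smul, one_smul, smul_eq_mul, ← map_mul]
  rw [sum_quadraticChar_palindromic_quartic hF]
  simp only [hweight, sum_add_distrib]
  rw [sum_quadraticChar_quartic_eq_cubic hF, hquad]
  ring

end FiniteField

theorem stmt5_general (p n : ℕ) (hp : p.Prime) (hp2 : p ≠ 2) (hp3 : p ≠ 3)
    (F : Type*) [Field F] [Fintype F] [DecidableEq F]
    (hcard : Fintype.card F = p ^ n) :
    ∑ x : F, quadraticChar F ((x ^ 2 + x + 1) * (3 * x ^ 2 + 2 * x + 3)) = (∑ x : F, quadraticChar F (x * (x + 1) * (x - 2))) - quadraticChar F 3 := by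
  have := Fact.mk hp
  have := charP_of_card_eq_prime_pow hcard
  have h3 : (3 : F) ≠ 0 := fun h ↦ hp3 <| (Nat.prime_dvd_prime_iff_eq hp Nat.prime_three).mp <|
    (CharP.cast_eq_zero_iff F p 3).mp (by exact_mod_cast h)
  exact FiniteField.sum_quadraticChar_palindromic_quartic_eq_cubic
    (by rwa [ringChar.eq F p]) h3

theorem stmt5 (p n : ℕ) (hp : p.Prime) (hp2 : p ≠ 2) (hp3 : p ≠ 3) (hn : 0 < n)
    (F : Type*) [Field F] [Fintype F] [DecidableEq F]
    (hcard : Fintype.card F = p ^ n) (hq : p ^ n % 4 = 3) :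
    ∑ x : F, quadraticChar F ((x ^ 2 + x + 1) * (3 * x ^ 2 + 2 * x + 3)) = (∑ x : F, quadraticChar F (x * (x + 1) * (x - 2))) - quadraticChar F 3 :=
  stmt5_general p n hp hp2 hp3 F hcard
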